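/- Let p ≥ 5 be a prime. Then ∑_{r=1}^{p-1} (3r)!/(r!^3) * 27^{-r} * (1/r^2) ≡ -(9/2)*q_p(1/3)^2 (mod p), where q_p(1/3) = ((1/3)^{p-1} - 1)/p is the Fermat quotient of the p-adic unit 1/3. -/

import Mathlib

/-!
Both sides are `p`-integral, and the congruence is an equality of their reductions in `ZMod p`.

Pick `a ∈ {⌊p/3⌋, ⌊2p/3⌋}` with `3a + 1 ≡ 0`. Then `(j + 1/3)(j + 2/3) ≡ (j - a)(j + a + 1)`,
so `(3r)!/(r!³ 27ʳ) = ∏_{j<r} (j + 1/3)(j + 2/3)/(j + 1)² ≡ (-1)ʳ C(a,r) C(a+r,r)`, and the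
sum becomes `∑_{k≤a} (-1)ᵏ C(a,k) C(a+k,k)/k²`, which is `-2 H_a²` over `ℚ` (a WZ pair).
The reflection `H_{p-1-t} ≡ H_t` gives `H_a ≡ H_{⌊p/3⌋}`. Writing `3k = r_k + p e_k`, where
`k ↦ r_k` permutes `1, …, p - 1`, Eisenstein's product `3^{p-1} = ∏_k (1 + p e_k / r_k)` gives
`q_p(3) ≡ ∑_k e_k / (3k)`; as `e_k = [k > ⌊p/3⌋] + [k > ⌊2p/3⌋]`, this is Lehmer's
`q_p(3) ≡ -(2/3) H_{⌊p/3⌋}`. Finally `q_p(1/3) ≡ -q_p(3)`, so both sides are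
`-2 H_{⌊p/3⌋}²`.
-/

open Finset
open scoped Nat

lemma cast_choose_ratios (n k : ℕ) (hk : k ≤ n + 1) :
    (n.choose k : ℚ) = (n + 1 - k) / (n + 1) * (n + 1).choose k ∧
    ((n + 1 + k).choose k : ℚ) = (n + k + 1) / (n + 1) * (n + k).choose k ∧
    ((n + 1).choose (k + 1) : ℚ) = (n + 1 - k) / (k + 1) * (n + 1).choose k ∧
    ((n + k + 1).choose (k + 1) : ℚ) = (n + k + 1) / (k + 1) * (n + k).choose k := by
  have h1 := Nat.choose_mul_succ_eq n k
  have h2 := Nat.choose_mul_succ_eq (n + k) k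
  have h3 := Nat.choose_succ_right_eq (n + 1) k
  have h4 := Nat.add_one_mul_choose_eq (n + k) k
  rw [show n + k + 1 - k = n + 1 by omega, show n + k + 1 = n + 1 + k by omega] at h2
  qify [hk] at h1 h2 h3 h4
  refine ⟨?_, ?_, ?_, ?_⟩ <;> field_simp
  exacts [by linear_combination h1, by linear_combination -h2, by linear_combination h3,
    by linear_combination -h4]

-- `G = wzCert` pairs with `F(n,k) = (-1)ᵏ C(n,k) C(n+k,k) / k`:
-- `F(n+1,k) - F(n,k) = G(n,k+1) - G(n,k)`.
def wzCert (n k : ℕ) : ℚ :=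
  -2 * k ^ 2 * (-1) ^ k * (n + 1).choose k * (n + k).choose k / (n + 1) ^ 3

lemma wzCert_one (n : ℕ) : wzCert n 1 = 2 / (n + 1) := by
  simp only [wzCert, Nat.choose_one_right]
  push_cast
  field_simp

lemma wzCert_of_lt {n k : ℕ} (hk : n + 1 < k) : wzCert n k = 0 := by
  simp [wzCert, Nat.choose_eq_zero_of_lt hk]

lemma wzCert_succ (n k : ℕ) (hk : k ≤ n + 1) :
    wzCert n (k + 1) = 2 * (-1) ^ k * (n + 1 - k) * (n + k + 1) * (n + 1).choose k
      * (n + k).choose k / (n + 1) ^ 3 := by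
  obtain ⟨-, -, h3, h4⟩ := cast_choose_ratios n k hk
  rw [wzCert, show n + (k + 1) = n + k + 1 from rfl, h3, h4]
  push_cast
  field_simp
  ring

lemma choose_div_succ_sub (n k : ℕ) (hk1 : 1 ≤ k) (hk : k ≤ n + 1) :
    ((-1) ^ k * (n + 1).choose k * (n + 1 + k).choose k / k : ℚ)
      - (-1) ^ k * n.choose k * (n + k).choose k / k = wzCert n (k + 1) - wzCert n k := by
  obtain ⟨h1, h2, -, -⟩ := cast_choose_ratios n k hk
  have : (k : ℚ) ≠ 0 := by positivity
  rw [wzCert_succ n k hk, wzCert, h1, h2]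
  field_simp
  ring

lemma choose_div_sq_succ_sub (n k : ℕ) (hk1 : 1 ≤ k) (hk : k ≤ n + 1) :
    ((-1) ^ k * (n + 1).choose k * (n + 1 + k).choose k / k ^ 2 : ℚ)
      - (-1) ^ k * n.choose k * (n + k).choose k / k ^ 2
      - 2 / (n + 1) * ((-1) ^ k * n.choose k * (n + k).choose k / k)
      = (wzCert n (k + 1) - wzCert n k) / (n + 1) := by
  obtain ⟨h1, h2, -, -⟩ := cast_choose_ratios n k hk
  have : (k : ℚ) ≠ 0 := by positivity
  rw [wzCert_succ n k hk, wzCert, h1, h2]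
  field_simp
  ring

lemma sum_wzCert_sub (n : ℕ) :
    ∑ k ∈ Icc 1 (n + 1), (wzCert n (k + 1) - wzCert n k) = -2 / (n + 1) := by
  rw [sum_Icc_sub (by omega), wzCert_of_lt (by omega), wzCert_one, zero_sub, neg_div]

lemma sum_choose_mul_choose_div (n : ℕ) :
    ∑ k ∈ Icc 1 n, ((-1) ^ k * n.choose k * (n + k).choose k / k : ℚ) = -2 * harmonic n := by
  induction n with
  | zero => simp
  | succ n ih =>
    have step : ∀ k ∈ Icc 1 (n + 1),
        ((-1) ^ k * (n + 1).choose k * (n + 1 + k).choose k / k : ℚ)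
          = (-1) ^ k * n.choose k * (n + k).choose k / k + (wzCert n (k + 1) - wzCert n k) := by
      intro k hk
      rw [mem_Icc] at hk
      rw [← choose_div_succ_sub n k hk.1 hk.2, add_sub_cancel]
    rw [sum_congr rfl step, sum_add_distrib, sum_Icc_succ_top (by omega), ih, sum_wzCert_sub,
      Nat.choose_eq_zero_of_lt (by omega : n < n + 1), harmonic_succ]
    push_cast
    ring

lemma sum_choose_mul_choose_div_sq (n : ℕ) :
    ∑ k ∈ Icc 1 n, ((-1) ^ k * n.choose k * (n + k).choose k / k ^ 2 : ℚ)
      = -2 * harmonic n ^ 2 := by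
  induction n with
  | zero => simp
  | succ n ih =>
    have step : ∀ k ∈ Icc 1 (n + 1),
        ((-1) ^ k * (n + 1).choose k * (n + 1 + k).choose k / k ^ 2 : ℚ)
          = (-1) ^ k * n.choose k * (n + k).choose k / k ^ 2
            + 2 / (n + 1) * ((-1) ^ k * n.choose k * (n + k).choose k / k)
            + (wzCert n (k + 1) - wzCert n k) / (n + 1) := by
      intro k hk
      rw [mem_Icc] at hk
      rw [← choose_div_sq_succ_sub n k hk.1 hk.2]
      ring
    rw [sum_congr rfl step, sum_add_distrib, sum_add_distrib, ← mul_sum, ← sum_div,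
      sum_wzCert_sub, sum_Icc_succ_top (by omega), sum_Icc_succ_top (by omega), ih,
      sum_choose_mul_choose_div,
      Nat.choose_eq_zero_of_lt (by omega : n < n + 1), harmonic_succ]
    push_cast
    field_simp
    ring

lemma factorial_three_mul_eq {R : Type*} [CommRing R] {a : R} (ha : 3 * a + 1 = 0) (k : ℕ) :
    ((3 * k)! : R) = 27 ^ k * k ! * ∏ j ∈ range k, ((j - a) * (j + a + 1)) := by
  induction k with
  | zero => simp
  | succ k ih =>
    rw [show 3 * (k + 1) = 3 * k + 1 + 1 + 1 by ring, Nat.factorial_succ, Nat.factorial_succ,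
      Nat.factorial_succ, prod_range_succ, Nat.factorial_succ]
    push_cast
    rw [ih]
    linear_combination
      3 * (k + 1) * 27 ^ k * k ! * (∏ j ∈ range k, ((j - a) * (j + a + 1))) * (3 * a + 2) * ha

lemma factorial_sq_mul_choose_mul_choose {R : Type*} [CommRing R] (a k : ℕ) :
    (k ! : R) ^ 2 * ((-1) ^ k * a.choose k * (a + k).choose k)
      = ∏ j ∈ range k, ((j - a : R) * (j + a + 1)) := by
  have hdesc : (k ! * a.choose k : R) = ∏ j ∈ range k, (a - j : R) := by
    rw [← descPochhammer_eval_eq_prod_range, descPochhammer_eval_eq_descFactorial,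
      Nat.descFactorial_eq_factorial_mul_choose]
    push_cast; ring
  have hasc : (k ! * (a + k).choose k : R) = ∏ j ∈ range k, (j + a + 1 : R) := by
    rw [← Nat.cast_mul, ← Nat.ascFactorial_eq_factorial_mul_choose,
      Nat.ascFactorial_eq_prod_range]
    push_cast
    exact prod_congr rfl fun j _ => by ring
  have hneg : ∏ j ∈ range k, (j - a : R) = (-1) ^ k * ∏ j ∈ range k, (a - j : R) := by
    simpa using prod_neg (s := range k) fun j => (a - j : R)
  rw [prod_mul_distrib, ← hasc, hneg, ← hdesc]
  ring

lemma factorial_three_mul_div {K : Type*} [Field K] {a k : ℕ} (ha : 3 * (a : K) + 1 = 0)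
    (hk : (k ! : K) ≠ 0) :
    ((3 * k)! : K) / (k ! : K) ^ 3 * (1 / 27) ^ k = (-1) ^ k * a.choose k * (a + k).choose k := by
  have h3 : (3 : K) ≠ 0 := fun h => by simp [h] at ha
  have h27 : (27 : K) ≠ 0 := by rw [show (27 : K) = 3 ^ 3 by norm_num]; exact pow_ne_zero 3 h3
  rw [factorial_three_mul_eq ha, ← factorial_sq_mul_choose_mul_choose, one_div, inv_pow]
  field_simp

lemma Nat.Prime.mod_three_ne_zero {p : ℕ} (hp : p.Prime) (hp3 : p ≠ 3) : p % 3 ≠ 0 := fun h =>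
  hp3 ((Nat.prime_dvd_prime_iff_eq Nat.prime_three hp).mp (Nat.dvd_of_mod_eq_zero h)).symm

lemma three_mul_div_eq {p k : ℕ} (hp3 : p % 3 ≠ 0) (hk : k < p) :
    3 * k / p = (if p / 3 < k then 1 else 0) + (if 2 * p / 3 < k then 1 else 0) := by
  have hp : 0 < p := by omega
  have h1 := Nat.div_mul_le_self (3 * k) p
  have h2 := Nat.lt_div_mul_add (a := 3 * k) hp
  have h3 : 3 * k / p < 3 := Nat.div_lt_of_lt_mul (by omega)
  interval_cases h : 3 * k / p <;> split_ifs <;> omega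

def fermatQuotient (p : ℕ) (x : ℚ) : ℚ := (x ^ (p - 1) - 1) / p

lemma fermatQuotient_inv (p : ℕ) {x : ℚ} (hx : x ≠ 0) :
    fermatQuotient p x⁻¹ = -fermatQuotient p x / x ^ (p - 1) := by
  have : x⁻¹ ^ (p - 1) - 1 = -(x ^ (p - 1) - 1) / x ^ (p - 1) := by
    rw [inv_pow]; field_simp; ring
  rw [fermatQuotient, fermatQuotient, this]
  ring

-- `x` is `p`-integral and `a` is its reduction modulo `p`.
def ReducesTo (p : ℕ) [Fact p.Prime] (x : ℚ) (a : ZMod p) : Prop :=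
  ∃ n d : ℤ, (d : ZMod p) ≠ 0 ∧ x = (n : ℚ) / d ∧ a = (n : ZMod p) / d

def harmonicZMod (p n : ℕ) : ZMod p := ∑ k ∈ Icc 1 n, (k : ZMod p)⁻¹

lemma mem_Icc_one_sub_one_iff {p k : ℕ} : k ∈ Icc 1 (p - 1) ↔ k < p ∧ (k : ZMod p) ≠ 0 := by
  rw [mem_Icc, Ne, ZMod.natCast_eq_zero_iff]
  constructor
  · rintro ⟨h1, h2⟩
    exact ⟨by omega, fun h => by have := Nat.le_of_dvd h1 h; omega⟩
  · rintro ⟨h1, h2⟩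
    exact ⟨Nat.pos_of_ne_zero (by rintro rfl; exact h2 (dvd_zero p)), by omega⟩

section

variable {p : ℕ} [hp : Fact p.Prime]

namespace ReducesTo

variable {x y : ℚ} {a b c : ZMod p}

lemma natCast (n : ℕ) : ReducesTo p n n := ⟨n, 1, by simp, by simp, by simp⟩

lemma ofNat (n : ℕ) [n.AtLeastTwo] : ReducesTo p (OfNat.ofNat n) (OfNat.ofNat n) :=
  natCast n

lemma zero : ReducesTo p 0 0 := by simpa using natCast (p := p) 0

lemma one : ReducesTo p 1 1 := by simpa using natCast (p := p) 1

private lemma intCast_ne_zero_of_zmod {d : ℤ} (hd : (d : ZMod p) ≠ 0) : (d : ℚ) ≠ 0 := by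
  rintro h
  exact hd (by simp [Int.cast_eq_zero.mp h])

lemma add (hx : ReducesTo p x a) (hy : ReducesTo p y b) : ReducesTo p (x + y) (a + b) := by
  obtain ⟨n, d, hd, rfl, rfl⟩ := hx
  obtain ⟨m, e, he, rfl, rfl⟩ := hy
  refine ⟨n * e + m * d, d * e, by push_cast; exact mul_ne_zero hd he, ?_, ?_⟩
  · have := intCast_ne_zero_of_zmod hd; have := intCast_ne_zero_of_zmod he
    push_cast; field_simp
  · push_cast; field_simp

lemma mul (hx : ReducesTo p x a) (hy : ReducesTo p y b) : ReducesTo p (x * y) (a * b) := by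
  obtain ⟨n, d, hd, rfl, rfl⟩ := hx
  obtain ⟨m, e, he, rfl, rfl⟩ := hy
  refine ⟨n * m, d * e, by push_cast; exact mul_ne_zero hd he, ?_, ?_⟩ <;>
  · push_cast; rw [div_mul_div_comm]

lemma neg (hx : ReducesTo p x a) : ReducesTo p (-x) (-a) := by
  obtain ⟨n, d, hd, rfl, rfl⟩ := hx
  exact ⟨-n, d, hd, by push_cast; ring, by push_cast; ring⟩

lemma sub (hx : ReducesTo p x a) (hy : ReducesTo p y b) : ReducesTo p (x - y) (a - b) := by
  simpa [sub_eq_add_neg] using hx.add hy.neg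

lemma pow (hx : ReducesTo p x a) (k : ℕ) : ReducesTo p (x ^ k) (a ^ k) := by
  induction k with
  | zero => simpa using one
  | succ k ih => simpa [pow_succ] using ih.mul hx

lemma inv (hx : ReducesTo p x a) (ha : a ≠ 0) : ReducesTo p x⁻¹ a⁻¹ := by
  obtain ⟨n, d, hd, rfl, rfl⟩ := hx
  have hn : (n : ZMod p) ≠ 0 := by rintro h; simp [h] at ha
  exact ⟨d, n, hn, by rw [inv_div], by rw [inv_div]⟩

lemma div (hx : ReducesTo p x a) (hy : ReducesTo p y b) (hb : b ≠ 0) :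
    ReducesTo p (x / y) (a / b) :=
  hx.mul (hy.inv hb)

lemma sum {ι : Type*} (s : Finset ι) {x : ι → ℚ} {a : ι → ZMod p}
    (h : ∀ i ∈ s, ReducesTo p (x i) (a i)) :
    ReducesTo p (∑ i ∈ s, x i) (∑ i ∈ s, a i) := by
  classical
  induction s using Finset.induction_on with
  | empty => simpa using zero
  | insert i s hi ih =>
    rw [sum_insert hi, sum_insert hi]
    exact (h i (mem_insert_self i s)).add (ih fun j hj => h j (mem_insert_of_mem hj))

lemma unique (ha : ReducesTo p x a) (hb : ReducesTo p x b) : a = b := by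
  obtain ⟨n, d, hd, hx, rfl⟩ := ha
  obtain ⟨m, e, he, hx', rfl⟩ := hb
  rw [hx, div_eq_div_iff (intCast_ne_zero_of_zmod hd) (intCast_ne_zero_of_zmod he)] at hx'
  have hcast : n * e = m * d := by exact_mod_cast hx'
  rw [div_eq_div_iff hd he]
  exact_mod_cast congrArg (Int.cast : ℤ → ZMod p) hcast

lemma norm_padic_le_of_zero (hx : ReducesTo p x 0) :
    ‖(x : ℚ_[p])‖ ≤ (p : ℝ) ^ (-1 : ℤ) := by
  obtain ⟨n, d, hd, rfl, hn⟩ := hx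
  have hn : (p : ℤ) ∣ n := by
    rw [← ZMod.intCast_zmod_eq_zero_iff_dvd]
    simpa [eq_comm, hd] using hn
  have hd : ‖(d : ℚ_[p])‖ = 1 := by
    refine le_antisymm (Padic.norm_int_le_one d) (not_lt.mp fun h => hd ?_)
    exact (ZMod.intCast_zmod_eq_zero_iff_dvd d p).mpr (Padic.norm_intCast_lt_one_iff.mp h)
  push_cast
  rw [norm_div, hd, div_one]
  exact_mod_cast (Padic.norm_int_le_pow_iff_dvd n 1).mpr (by simpa using hn)

lemma prod_one_add_mul_sub_one_div {ι : Type*} (s : Finset ι) {x : ι → ℚ} {a : ι → ZMod p}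
    (h : ∀ i ∈ s, ReducesTo p (x i) (a i)) :
    ReducesTo p ((∏ i ∈ s, (1 + p * x i) - 1) / p) (∑ i ∈ s, a i) := by
  classical
  induction s using Finset.induction_on with
  | empty => simpa using zero
  | insert i s hi ih =>
    have ih := ih fun j hj => h j (mem_insert_of_mem hj)
    set P := ∏ j ∈ s, (1 + p * x j)
    have hp0 : (p : ℚ) ≠ 0 := by exact_mod_cast hp.out.ne_zero
    have hP : ReducesTo p P 1 := by
      have := one.add ((natCast p).mul ih)
      rwa [ZMod.natCast_self, zero_mul, add_zero, mul_div_cancel₀ _ hp0, add_sub_cancel] at this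
    have key : ((1 + p * x i) * P - 1) / p = x i * P + (P - 1) / p := by
      field_simp
      ring
    rw [prod_insert hi, sum_insert hi, key]
    simpa using ((h i (mem_insert_self i s)).mul hP).add ih

lemma fermatQuotient_inv (hx : ReducesTo p x a) (ha : a ≠ 0)
    (hq : ReducesTo p (fermatQuotient p x) c) : ReducesTo p (fermatQuotient p x⁻¹) (-c) := by
  have hx0 : x ≠ 0 := by rintro rfl; exact ha (hx.unique .zero)
  rw [_root_.fermatQuotient_inv p hx0]
  simpa [ZMod.pow_card_sub_one_eq_one ha] using hq.neg.div (hx.pow (p - 1)) (pow_ne_zero _ ha)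

end ReducesTo

lemma prod_Icc_mul_mod {b : ℕ} (hb : (b : ZMod p) ≠ 0) :
    ∏ k ∈ Icc 1 (p - 1), (b * k % p) = ∏ k ∈ Icc 1 (p - 1), k := by
  refine prod_nbij' (fun k => b * k % p) (fun k => ((b : ZMod p)⁻¹ * k).val) ?_ ?_ ?_ ?_
    fun _ _ => rfl
  all_goals intro k hk; simp only [mem_Icc_one_sub_one_iff] at hk ⊢
  · exact ⟨Nat.mod_lt _ hp.out.pos, by simpa using mul_ne_zero hb hk.2⟩
  · exact ⟨ZMod.val_lt _, by simpa using mul_ne_zero (inv_ne_zero hb) hk.2⟩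
  · simp [← mul_assoc, inv_mul_cancel₀ hb, ZMod.val_natCast, Nat.mod_eq_of_lt hk.1]
  · rw [← ZMod.val_natCast]
    simp [← mul_assoc, mul_inv_cancel₀ hb, ZMod.val_natCast, Nat.mod_eq_of_lt hk.1]

lemma natCast_mul_mod_ne_zero {b k : ℕ} (hb : (b : ZMod p) ≠ 0) (hk : k ∈ Icc 1 (p - 1)) :
    ((b * k % p : ℕ) : ZMod p) ≠ 0 := by
  simpa [ZMod.natCast_mod] using mul_ne_zero hb (mem_Icc_one_sub_one_iff.mp hk).2

lemma pow_sub_one_eq_prod {b : ℕ} (hb : (b : ZMod p) ≠ 0) :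
    (b : ℚ) ^ (p - 1)
      = ∏ k ∈ Icc 1 (p - 1), (1 + p * (((b * k / p : ℕ) : ℚ) / (b * k % p : ℕ))) := by
  have hfactor : ∀ k ∈ Icc 1 (p - 1),
      1 + p * (((b * k / p : ℕ) : ℚ) / (b * k % p : ℕ))
        = (b * k : ℕ) / (b * k % p : ℕ) := by
    intro k hk
    have hr : ((b * k % p : ℕ) : ℚ) ≠ 0 :=
      Nat.cast_ne_zero.mpr fun h => natCast_mul_mod_ne_zero hb hk (by rw [h, Nat.cast_zero])
    rw [eq_div_iff hr, add_mul, one_mul, mul_assoc, div_mul_cancel₀ _ hr]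
    exact_mod_cast Nat.mod_add_div (b * k) p
  have hfact : (∏ k ∈ Icc 1 (p - 1), (k : ℚ)) ≠ 0 :=
    prod_ne_zero_iff.mpr fun k hk => by have := (mem_Icc.mp hk).1; positivity
  rw [prod_congr rfl hfactor, prod_div_distrib]
  simp only [Nat.cast_mul, prod_mul_distrib, prod_const, Nat.card_Icc]
  rw [← Nat.cast_prod (fun k => b * k % p), prod_Icc_mul_mod hb, Nat.cast_prod,
    mul_div_cancel_right₀ _ hfact]
  congr 1

lemma reducesTo_fermatQuotient {b : ℕ} (hb : (b : ZMod p) ≠ 0) :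
    ReducesTo p (fermatQuotient p b)
      (∑ k ∈ Icc 1 (p - 1), ((b * k / p : ℕ) : ZMod p) / (b * k : ZMod p)) := by
  rw [fermatQuotient, pow_sub_one_eq_prod hb]
  refine ReducesTo.prod_one_add_mul_sub_one_div _ fun k hk => ?_
  simpa using (ReducesTo.natCast (b * k / p)).div (.natCast _) (natCast_mul_mod_ne_zero hb hk)

lemma sum_Icc_inv_eq_neg_harmonicZMod {t : ℕ} (ht : t ≤ p - 1) :
    ∑ k ∈ Icc (t + 1) (p - 1), (k : ZMod p)⁻¹ = -harmonicZMod p (p - 1 - t) := by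
  rw [harmonicZMod, ← sum_neg_distrib]
  refine sum_nbij' (fun k => p - k) (fun k => p - k) ?_ ?_ ?_ ?_ fun k hk => ?_
  all_goals simp only [mem_Icc] at *
  all_goals try omega
  rw [Nat.cast_sub (by omega), ZMod.natCast_self, zero_sub, inv_neg, neg_neg]

lemma harmonicZMod_sub_one (hp2 : p ≠ 2) : harmonicZMod p (p - 1) = 0 := by
  have h := sum_Icc_inv_eq_neg_harmonicZMod (p := p) (t := 0) (Nat.zero_le _)
  rw [zero_add, Nat.sub_zero, ← harmonicZMod, eq_neg_iff_add_eq_zero, ← two_mul] at h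
  have h2 : (2 : ZMod p) ≠ 0 := by
    simpa using (ZMod.natCast_eq_zero_iff 2 p).not.mpr
      fun h => hp2 ((Nat.prime_dvd_prime_iff_eq hp.out Nat.prime_two).mp h)
  exact (mul_eq_zero.mp h).resolve_left h2

lemma harmonicZMod_sub_one_sub (hp2 : p ≠ 2) {t : ℕ} (ht : t ≤ p - 1) :
    harmonicZMod p (p - 1 - t) = harmonicZMod p t := by
  have hsplit : harmonicZMod p (p - 1)
      = harmonicZMod p t + ∑ k ∈ Icc (t + 1) (p - 1), (k : ZMod p)⁻¹ := by
    rw [harmonicZMod, harmonicZMod, ← sum_union]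
    · congr 1; ext k; simp only [mem_union, mem_Icc]; omega
    · exact disjoint_left.mpr fun k hk hk' => by simp only [mem_Icc] at hk hk'; omega
  rw [harmonicZMod_sub_one hp2, sum_Icc_inv_eq_neg_harmonicZMod ht] at hsplit
  linear_combination hsplit

lemma reducesTo_harmonic {n : ℕ} (hn : n < p) : ReducesTo p (harmonic n) (harmonicZMod p n) := by
  rw [harmonic_eq_sum_Icc, harmonicZMod]
  refine ReducesTo.sum _ fun k hk => (ReducesTo.natCast k).inv ?_
  exact (mem_Icc_one_sub_one_iff.mp (by simp only [mem_Icc] at hk ⊢; omega)).2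

lemma sum_three_mul_div_div (hp5 : 5 ≤ p) :
    ∑ k ∈ Icc 1 (p - 1), ((3 * k / p : ℕ) : ZMod p) / (3 * k)
      = -(2 / 3) * harmonicZMod p (p / 3) := by
  have hp3 := hp.out.mod_three_ne_zero (by omega)
  have h3 : (3 : ZMod p) ≠ 0 := by
    simpa using (mem_Icc_one_sub_one_iff (p := p) (k := 3)).mp (by simp only [mem_Icc]; omega) |>.2
  have htail : ∀ t, ∑ k ∈ Icc 1 (p - 1), (if t < k then (k : ZMod p)⁻¹ else 0)
      = ∑ k ∈ Icc (t + 1) (p - 1), (k : ZMod p)⁻¹ := fun t => by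
    rw [← sum_filter]; congr 1; ext k; simp only [mem_filter, mem_Icc]; omega
  calc ∑ k ∈ Icc 1 (p - 1), ((3 * k / p : ℕ) : ZMod p) / (3 * k)
      = 3⁻¹ * (∑ k ∈ Icc 1 (p - 1), (if p / 3 < k then (k : ZMod p)⁻¹ else 0)
          + ∑ k ∈ Icc 1 (p - 1), (if 2 * p / 3 < k then (k : ZMod p)⁻¹ else 0)) := by
        rw [← sum_add_distrib, mul_sum]
        refine sum_congr rfl fun k hk => ?_
        rw [three_mul_div_eq hp3 (mem_Icc_one_sub_one_iff.mp hk).1, div_eq_mul_inv, mul_inv]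
        split_ifs <;> push_cast <;> ring
    _ = -(2 / 3) * harmonicZMod p (p / 3) := by
        rw [htail, htail, sum_Icc_inv_eq_neg_harmonicZMod (by omega),
          sum_Icc_inv_eq_neg_harmonicZMod (by omega), show p - 1 - 2 * p / 3 = p / 3 by omega,
          harmonicZMod_sub_one_sub (by omega) (by omega)]
        ring

lemma reducesTo_fermatQuotient_three (hp5 : 5 ≤ p) :
    ReducesTo p (fermatQuotient p 3) (-(2 / 3) * harmonicZMod p (p / 3)) := by
  have h3 : ((3 : ℕ) : ZMod p) ≠ 0 :=
    (mem_Icc_one_sub_one_iff.mp (by simp only [mem_Icc]; omega)).2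
  rw [← sum_three_mul_div_div hp5]
  simpa using reducesTo_fermatQuotient h3

lemma sum_choose_mul_choose_div_sq_zmod {n : ℕ} (hn : n < p) :
    ∑ k ∈ Icc 1 n, ((-1) ^ k * n.choose k * (n + k).choose k / k ^ 2 : ZMod p)
      = -2 * harmonicZMod p n ^ 2 := by
  have hsum :
      ReducesTo p (∑ k ∈ Icc 1 n, ((-1) ^ k * n.choose k * (n + k).choose k / k ^ 2 : ℚ))
        (∑ k ∈ Icc 1 n, ((-1) ^ k * n.choose k * (n + k).choose k / k ^ 2 : ZMod p)) := by
    refine ReducesTo.sum _ fun k hk => ?_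
    have hk0 := (mem_Icc_one_sub_one_iff (p := p) (k := k)).mp
      (by simp only [mem_Icc] at hk ⊢; omega)
    exact (((ReducesTo.one.neg.pow k).mul (.natCast _)).mul (.natCast _)).div
      ((ReducesTo.natCast k).pow 2) (pow_ne_zero 2 hk0.2)
  rw [sum_choose_mul_choose_div_sq] at hsum
  exact hsum.unique ((ReducesTo.ofNat 2).neg.mul ((reducesTo_harmonic hn).pow 2))

lemma reducesTo_sum_factorial_three_mul {a : ℕ} (ha : 3 * (a : ZMod p) + 1 = 0) (hap : a < p) :
    ReducesTo p
      (∑ r ∈ Icc 1 (p - 1), ((3 * r)! : ℚ) / (r ! : ℚ) ^ 3 * (1 / 27) ^ r * (1 / (r : ℚ) ^ 2))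
      (-2 * harmonicZMod p a ^ 2) := by
  have h3 : (3 : ZMod p) ≠ 0 := fun h => by simp [h] at ha
  have h27 : (27 : ZMod p) ≠ 0 := by
    rw [show (27 : ZMod p) = 3 ^ 3 by norm_num]; exact pow_ne_zero 3 h3
  have hterm : ∀ r ∈ Icc 1 (p - 1),
      ReducesTo p (((3 * r)! : ℚ) / (r ! : ℚ) ^ 3 * (1 / 27) ^ r * (1 / (r : ℚ) ^ 2))
        ((-1) ^ r * a.choose r * (a + r).choose r / r ^ 2) := by
    intro r hr
    have hr := mem_Icc_one_sub_one_iff.mp hr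
    have hfact : (r ! : ZMod p) ≠ 0 := by
      rw [Ne, ZMod.natCast_eq_zero_iff, hp.out.dvd_factorial]
      omega
    rw [← factorial_three_mul_div ha hfact, div_eq_mul_one_div _ ((r : ZMod p) ^ 2)]
    exact (((ReducesTo.natCast _).div ((ReducesTo.natCast _).pow 3) (pow_ne_zero 3 hfact)).mul
      ((ReducesTo.one.div (.ofNat 27) h27).pow r)).mul
      (ReducesTo.one.div ((ReducesTo.natCast r).pow 2) (pow_ne_zero 2 hr.2))
  have hvanish : ∀ r ∈ Icc 1 (p - 1), r ∉ Icc 1 a →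
      ((-1) ^ r * a.choose r * (a + r).choose r / r ^ 2 : ZMod p) = 0 := by
    intro r hr hra
    simp only [mem_Icc] at hr hra
    simp [Nat.choose_eq_zero_of_lt (by omega : a < r)]
  have hsum := ReducesTo.sum _ hterm
  rwa [← sum_subset (Icc_subset_Icc_right (by omega)) hvanish,
    sum_choose_mul_choose_div_sq_zmod hap] at hsum

lemma exists_three_mul_add_one_eq_zero (hp5 : 5 ≤ p) :
    ∃ a < p, 3 * (a : ZMod p) + 1 = 0 ∧ harmonicZMod p a = harmonicZMod p (p / 3) := by
  have hp3 := hp.out.mod_three_ne_zero (by omega)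
  rcases (by omega : p % 3 = 1 ∨ p % 3 = 2) with h | h
  · refine ⟨p / 3, by omega, ?_, rfl⟩
    have : ((3 * (p / 3) + 1 : ℕ) : ZMod p) = 0 := by
      rw [show 3 * (p / 3) + 1 = p by omega, ZMod.natCast_self]
    exact_mod_cast this
  · refine ⟨2 * p / 3, by omega, ?_, ?_⟩
    · have : ((3 * (2 * p / 3) + 1 : ℕ) : ZMod p) = 0 := by
        rw [show 3 * (2 * p / 3) + 1 = 2 * p by omega, Nat.cast_mul, ZMod.natCast_self, mul_zero]
      exact_mod_cast this
    · rw [← harmonicZMod_sub_one_sub (by omega) (by omega),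
        show p - 1 - 2 * p / 3 = p / 3 by omega]

end

theorem stmt_16 (p : ℕ) [Fact p.Prime] (hp5 : 5 ≤ p) :
    ‖(((∑ r ∈ Finset.Icc 1 (p - 1),
          (((3 * r).factorial : ℚ) / ((r.factorial : ℚ)) ^ 3 * (1 / 27) ^ r * (1 / (r : ℚ) ^ 2))
        - (-(9 / 2) * (((1 / 3 : ℚ) ^ (p - 1) - 1) / p) ^ 2)) : ℚ) : ℚ_[p])‖
      ≤ (p : ℝ) ^ (-1 : ℤ) := by
  obtain ⟨a, hap, ha, hHa⟩ := exists_three_mul_add_one_eq_zero hp5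
  have h2 : (2 : ZMod p) ≠ 0 := (mem_Icc_one_sub_one_iff.mp (by simp only [mem_Icc]; omega)).2
  have h3 : (3 : ZMod p) ≠ 0 := (mem_Icc_one_sub_one_iff.mp (by simp only [mem_Icc]; omega)).2
  have hq : ReducesTo p (fermatQuotient p (1 / 3)) (2 / 3 * harmonicZMod p (p / 3)) := by
    simpa [one_div] using
      (ReducesTo.ofNat 3).fermatQuotient_inv h3 (reducesTo_fermatQuotient_three hp5)
  have h92 : ReducesTo p (-(9 / 2)) (-(9 / 2)) := ((ReducesTo.ofNat 9).div (.ofNat 2) h2).neg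
  have key := (reducesTo_sum_factorial_three_mul ha hap).sub (h92.mul (hq.pow 2))
  rw [hHa, show -2 * harmonicZMod p (p / 3) ^ 2 - -(9 / 2) * (2 / 3 * harmonicZMod p (p / 3)) ^ 2
    = 0 by field_simp; ring] at key
  exact key.norm_padic_le_of_zero
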